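/- Let bsm_n be the number of bilaterally symmetric matchings on [2n]. Then Σ_{n≥0} bsm_n t^n/n! = exp(t + t²) as formal power series over ℚ; equivalently, for every n ≥ 0, bsm_n equals n! times the coefficient of t^n in exp(t + t²). -/

import Mathlib

/-!
Identify `[2n]` with `Fin n × Bool` so that the reflection becomes `(a, b) ↦ (a, !b)`.
A fixed-point-free involution commuting with this flip has the form
`(a, b) ↦ (σ a, ε a xor b)`, where `σ` is an involution of `Fin n`, `ε` is constant on the
cycles of `σ` and `ε = true` at the fixed points of `σ` (the arcs crossing the axis).
Hence `bsm_n = ∑_{σ² = 1} 2 ^ (number of 2-cycles of σ)`, and since there are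
`n! / ((n - 2b)! 2^b b!)` involutions with `b` transpositions,
`bsm_n = ∑_b n! / ((n - 2b)! b!) = n! [tⁿ] exp(t + t²)`.
-/

open scoped BigOperators

/-- A matching on `[2n] = Fin (2n)` encoded as a fixed-point-free involution: the
arcs of the matching are the pairs `{i, f i}`. -/
def IsMatchingInv {m : ℕ} (f : Equiv.Perm (Fin m)) : Prop :=
  ∀ i, f (f i) = i ∧ f i ≠ i

/-- The matching is bilaterally symmetric: it equals its reflection in the vertical
axis, i.e. `(i,j)` is an arc iff `(2n+1-j, 2n+1-i)` is (via `Fin.rev`). -/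
def IsBilatSym {m : ℕ} (f : Equiv.Perm (Fin m)) : Prop :=
  ∀ i, f i.rev = (f i).rev

/-- The matching `f` has a `k`-crossing: arcs `(i₁,j₁),…,(i_k,j_k)` with
`i₁ < ⋯ < i_k < j₁ < ⋯ < j_k`. -/
def HasCrossing {m : ℕ} (f : Equiv.Perm (Fin m)) (k : ℕ) : Prop :=
  ∃ a b : Fin k → Fin m, StrictMono a ∧ StrictMono b ∧
    (∀ s t : Fin k, a s < b t) ∧ ∀ s, f (a s) = b s

/-- `bsm_n(d)`: the number of bilaterally symmetric `(d+1)`-noncrossing matchings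
on `[2n]`. -/
noncomputable def bsmCount (n d : ℕ) : ℕ :=
  Nat.card {f : Equiv.Perm (Fin (2 * n)) //
    IsMatchingInv f ∧ IsBilatSym f ∧ ¬ HasCrossing f (d + 1)}

/-- The formal power series `exp(t + t²)` over `ℚ`; its `n`-th coefficient is
`Σ_{a + 2b = n} 1/(a! b!)`. -/
noncomputable def expXplusX2 : PowerSeries ℚ :=
  PowerSeries.mk fun n =>
    ∑ b ∈ Finset.range (n + 1),
      if 2 * b ≤ n then (1 : ℚ) / ((n - 2 * b).factorial * b.factorial) else 0

open Equiv Finset Function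
open scoped Nat

namespace Equiv.Perm

variable {α β : Type*}

theorem SameCycle.apply_eq_of_forall_apply_eq {σ : Perm α} {ε : α → β}
    (hε : ∀ a, ε (σ a) = ε a) {x y : α} (h : σ.SameCycle x y) : ε x = ε y := by
  obtain ⟨i, rfl⟩ := h
  induction i using Int.induction_on with
  | zero => rfl
  | succ i ih => rw [add_comm, zpow_one_add, mul_apply, hε, ih]
  | pred i ih =>
    rw [ih, sub_eq_neg_add, zpow_add, zpow_neg_one, mul_apply, ← hε (σ⁻¹ _), inv_def,
      apply_symm_apply]

variable [Fintype α] [DecidableEq α]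

theorem card_cycleConstant_eq_pow [Finite β] (σ : Perm α) (b : β) :
    Nat.card {ε : α → β // (∀ a, ε (σ a) = ε a) ∧ ∀ a, σ a = a → ε a = b} =
      Nat.card β ^ σ.cycleType.card := by
  let extend (h : σ.cycleFactorsFinset → β) : α → β := fun a =>
    if ha : a ∈ σ.support then h ⟨σ.cycleOf a, cycleOf_mem_cycleFactorsFinset_iff.2 ha⟩ else b
  have extend_apply (h) (a) (ha : a ∈ σ.support) :
      extend h a = h ⟨σ.cycleOf a, cycleOf_mem_cycleFactorsFinset_iff.2 ha⟩ := dif_pos ha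
  have extend_invariant (h) :
      (∀ a, extend h (σ a) = extend h a) ∧ ∀ a, σ a = a → extend h a = b := by
    refine ⟨fun a => ?_, fun a ha => dif_neg (notMem_support.2 ha)⟩
    by_cases ha : a ∈ σ.support
    · simp only [extend_apply _ _ ha, extend_apply _ _ (apply_mem_support.2 ha),
        cycleOf_self_apply]
    · rw [notMem_support.1 ha]
  choose pt hpt using fun c : σ.cycleFactorsFinset =>
    (mem_cycleFactorsFinset_iff.1 c.2).1.nonempty_support
  have bij : Bijective fun h => (⟨extend h, extend_invariant h⟩ :
      {ε : α → β // (∀ a, ε (σ a) = ε a) ∧ ∀ a, σ a = a → ε a = b}) := by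
    refine ⟨fun h h' hh => funext fun c => ?_, fun ⟨ε, hε, hfix⟩ => ?_⟩
    · have hc : σ.cycleOf (pt c) = c := (cycle_is_cycleOf (hpt c) c.2).symm
      have := congrFun (congrArg Subtype.val hh) (pt c)
      simpa only [extend_apply _ _ (mem_cycleFactorsFinset_support_le c.2 (hpt c)), hc]
        using this
    · refine ⟨fun c => ε (pt c), Subtype.ext (funext fun a => ?_)⟩
      show extend (fun c => ε (pt c)) a = ε a
      by_cases ha : a ∈ σ.support
      · refine (extend_apply (fun c => ε (pt c)) a ha).trans ?_
        have := hpt ⟨σ.cycleOf a, cycleOf_mem_cycleFactorsFinset_iff.2 ha⟩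
        exact (SameCycle.apply_eq_of_forall_apply_eq hε (mem_support_cycleOf_iff.1 this).1).symm
      · exact (dif_neg ha).trans (hfix a (notMem_support.1 ha)).symm
  rw [← Nat.card_eq_of_bijective _ bij, Nat.card_fun, Nat.card_eq_finsetCard, cycleType_def,
    Multiset.card_map]
  rfl

theorem sq_eq_one_and_card_cycleType_eq_iff {σ : Perm α} {b : ℕ} :
    σ ^ 2 = 1 ∧ σ.cycleType.card = b ↔ σ.cycleType = Multiset.replicate b 2 := by
  refine ⟨fun ⟨hσ, hb⟩ => hb ▸ cycleType_of_pow_prime_eq_one hσ, fun h => ⟨?_, ?_⟩⟩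
  · exact pow_prime_eq_one_iff.2 fun c hc => Multiset.eq_of_mem_replicate (h ▸ hc)
  · rw [h, Multiset.card_replicate]

theorem two_mul_card_cycleType_le {σ : Perm α} (hσ : σ ^ 2 = 1) :
    2 * σ.cycleType.card ≤ Fintype.card α := by
  calc 2 * σ.cycleType.card = σ.cycleType.sum := by
        rw [cycleType_of_pow_prime_eq_one hσ, Multiset.card_replicate, Multiset.sum_replicate,
          smul_eq_mul, mul_comm]
    _ = #σ.support := σ.sum_cycleType
    _ ≤ Fintype.card α := card_le_univ _

theorem sum_sq_eq_one_eq_sum_range {M : Type*} [AddCommMonoid M] (f : ℕ → M) :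
    ∑ σ : Perm α with σ ^ 2 = 1, f σ.cycleType.card =
      ∑ b ∈ range (Fintype.card α + 1),
        #{σ : Perm α | σ.cycleType = Multiset.replicate b 2} • f b := by
  have maps (σ) (hσ : σ ∈ ({σ | σ ^ 2 = 1} : Finset (Perm α))) :
      σ.cycleType.card ∈ range (Fintype.card α + 1) := by
    have := two_mul_card_cycleType_le (mem_filter.1 hσ).2
    exact mem_range_succ_iff.2 (by omega)
  rw [← sum_fiberwise_of_maps_to' maps]
  refine sum_congr rfl fun b _ => ?_
  simp only [sum_const, filter_filter, sq_eq_one_and_card_cycleType_eq_iff]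

variable (α) in
theorem card_cycleType_replicate_two_mul (b : ℕ) :
    #{σ : Perm α | σ.cycleType = Multiset.replicate b 2} *
        ((Fintype.card α - 2 * b)! * 2 ^ b * b !) =
      if 2 * b ≤ Fintype.card α then (Fintype.card α)! else 0 := by
  have hcount :
      ∏ k ∈ (Multiset.replicate b 2).toFinset, ((Multiset.replicate b 2).count k)! = b ! := by
    rcases Nat.eq_zero_or_pos b with rfl | hb
    · simp
    · simp [Multiset.toFinset_replicate, hb.ne']
  have := card_of_cycleType_mul_eq α (Multiset.replicate b 2)
  rw [hcount, Multiset.sum_replicate, Multiset.prod_replicate, smul_eq_mul, mul_comm b 2] at this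
  simpa only [and_iff_left fun a ha => (Multiset.eq_of_mem_replicate ha).ge] using this

theorem sum_two_pow_card_cycleType :
    (∑ σ : Perm α with σ ^ 2 = 1, 2 ^ σ.cycleType.card : ℚ) =
      ∑ b ∈ range (Fintype.card α + 1), if 2 * b ≤ Fintype.card α then
        ((Fintype.card α)! / ((Fintype.card α - 2 * b)! * b !) : ℚ) else 0 := by
  rw [sum_sq_eq_one_eq_sum_range]
  refine sum_congr rfl fun b _ => ?_
  have h := congrArg (Nat.cast : ℕ → ℚ) (card_cycleType_replicate_two_mul α b)
  have hden : ((Fintype.card α - 2 * b)! * 2 ^ b * b ! : ℚ) ≠ 0 := by positivity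
  push_cast at h
  rw [nsmul_eq_mul]
  split_ifs at h ⊢
  · rw [← h]
    field_simp
  · rw [(mul_eq_zero.1 h).resolve_right hden, zero_mul]

end Equiv.Perm

def IsSymmetricMatching {β : Type*} (ρ u : β → β) : Prop :=
  Involutive u ∧ (∀ x, u x ≠ x) ∧ ∀ x, u (ρ x) = ρ (u x)

theorem IsSymmetricMatching.conj {β γ : Type*} {ρ : β → β} {τ : γ → γ} (e : β ≃ γ)
    (he : ∀ x, e (ρ x) = τ (e x)) {u : β → β} (hu : IsSymmetricMatching ρ u) :
    IsSymmetricMatching τ (e ∘ u ∘ e.symm) := by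
  refine ⟨fun y => by simp [hu.1 _], fun y h => hu.2.1 _ (e.eq_symm_apply.2 h), fun y => ?_⟩
  obtain ⟨x, rfl⟩ := e.surjective y
  simp [← he, hu.2.2]

theorem card_isSymmetricMatching_congr {β γ : Type*} {ρ : β → β} {τ : γ → γ} (e : β ≃ γ)
    (he : ∀ x, e (ρ x) = τ (e x)) :
    Nat.card {u // IsSymmetricMatching ρ u} = Nat.card {u // IsSymmetricMatching τ u} := by
  have he' (y) : e.symm (τ y) = ρ (e.symm y) := by
    rw [e.symm_apply_eq, he, e.apply_symm_apply]
  refine Nat.card_congr (e.arrowCongr e |>.subtypeEquiv fun u => ⟨(·.conj e he), fun h => ?_⟩)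
  simpa [comp_def] using h.conj e.symm he'

section Twist

variable {α : Type*}

def twistMap (σ : α → α) (ε : α → Bool) (x : α × Bool) : α × Bool :=
  (σ x.1, xor (ε x.1) x.2)

theorem isSymmetricMatching_twistMap_iff {σ : α → α} {ε : α → Bool} :
    IsSymmetricMatching (Prod.map id not) (twistMap σ ε) ↔
      Involutive σ ∧ (∀ a, ε (σ a) = ε a) ∧ ∀ a, σ a = a → ε a = true := by
  simp only [IsSymmetricMatching, Involutive, twistMap, Prod.forall, Prod.map, id, ne_eq,
    Prod.mk.injEq]
  constructor
  · rintro ⟨hinv, hfree, -⟩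
    refine ⟨fun a => (hinv a false).1, fun a => ?_, fun a ha => ?_⟩
    · simpa using (hinv a false).2
    · simpa [ha] using hfree a false
  · rintro ⟨hinv, hε, hfix⟩
    refine ⟨fun a b => ⟨hinv a, by simp [hε]⟩, fun a b ⟨ha, hb⟩ => ?_, fun a b => by simp⟩
    simp [hfix a ha] at hb

theorem IsSymmetricMatching.eq_twistMap {u : α × Bool → α × Bool}
    (hu : IsSymmetricMatching (Prod.map id not) u) :
    u = twistMap (fun a => (u (a, false)).1) (fun a => (u (a, false)).2) := by
  funext ⟨a, b⟩
  cases b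
  · simp [twistMap]
  · rw [twistMap, Bool.xor_true]
    exact hu.2.2 (a, false)

theorem IsSymmetricMatching.twistMap_conditions {u : α × Bool → α × Bool}
    (hu : IsSymmetricMatching (Prod.map id not) u) :
    Involutive (fun a => (u (a, false)).1) ∧
      (∀ a, (u ((u (a, false)).1, false)).2 = (u (a, false)).2) ∧
      ∀ a, (u (a, false)).1 = a → (u (a, false)).2 = true :=
  isSymmetricMatching_twistMap_iff.1 (hu.eq_twistMap ▸ hu)

variable (α) [Fintype α] [DecidableEq α]

def symmetricMatchingEquiv :
    {u : α × Bool → α × Bool // IsSymmetricMatching (Prod.map id not) u} ≃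
      Σ σ : {σ : Perm α // σ ^ 2 = 1},
        {ε : α → Bool // (∀ a, ε (σ.1 a) = ε a) ∧ ∀ a, σ.1 a = a → ε a = true} where
  toFun u := ⟨⟨u.2.twistMap_conditions.1.toPerm, Perm.ext u.2.twistMap_conditions.1⟩,
    ⟨fun a => (u.1 (a, false)).2, u.2.twistMap_conditions.2⟩⟩
  invFun p := ⟨twistMap p.1.1 p.2.1, isSymmetricMatching_twistMap_iff.2
    ⟨fun a => by simpa [sq] using Perm.ext_iff.1 p.1.2 a, p.2.2⟩⟩
  left_inv u := Subtype.ext u.2.eq_twistMap.symm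
  right_inv p := Sigma.subtype_ext (Subtype.ext (Perm.ext fun _ => rfl))
    (funext fun _ => Bool.xor_false _)

theorem card_symmetricMatching_prod_bool :
    Nat.card {u : α × Bool → α × Bool // IsSymmetricMatching (Prod.map id not) u} =
      ∑ σ : Perm α with σ ^ 2 = 1, 2 ^ σ.cycleType.card := by
  rw [Nat.card_congr (symmetricMatchingEquiv α), Nat.card_sigma]
  simp only [Perm.card_cycleConstant_eq_pow, Nat.card_eq_fintype_card (α := Bool),
    Fintype.card_bool]
  exact (sum_subtype _ (fun σ => by simp) (fun σ : Perm α => 2 ^ σ.cycleType.card)).symm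

end Twist

/-- `(k, false) ↦ k` and `(k, true) ↦ 2n - 1 - k`. -/
def finFoldEquiv (n : ℕ) : Fin n × Bool ≃ Fin (2 * n) :=
  (Equiv.prodComm _ _).trans <| (Equiv.boolProdEquivSum _).trans <|
    (Equiv.sumCongr (Equiv.refl _) Fin.revPerm).trans <|
      finSumFinEquiv.trans (finCongr (two_mul n).symm)

theorem finFoldEquiv_flip {n : ℕ} (x : Fin n × Bool) :
    finFoldEquiv n (Prod.map id not x) = (finFoldEquiv n x).rev := by
  obtain ⟨k, _ | _⟩ := x <;> ext <;> simp [finFoldEquiv, Equiv.boolProdEquivSum] <;> omega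

theorem card_matchingInv_bilatSym (m : ℕ) :
    Nat.card {f : Perm (Fin m) // IsMatchingInv f ∧ IsBilatSym f} =
      Nat.card {u : Fin m → Fin m // IsSymmetricMatching Fin.rev u} :=
  Nat.card_congr
    { toFun f := ⟨f.1, fun i => (f.2.1 i).1, fun i => (f.2.1 i).2, f.2.2⟩
      invFun u := ⟨u.2.1.toPerm, fun i => ⟨u.2.1 i, u.2.2.1 i⟩, u.2.2.2⟩
      left_inv _ := Subtype.ext (Perm.ext fun _ => rfl)
      right_inv _ := rfl }

theorem factorial_mul_coeff_expXplusX2 (n : ℕ) :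
    n ! * PowerSeries.coeff n expXplusX2 =
      ∑ b ∈ range (n + 1), if 2 * b ≤ n then (n ! / ((n - 2 * b)! * b !) : ℚ) else 0 := by
  rw [expXplusX2, PowerSeries.coeff_mk, mul_sum]
  refine sum_congr rfl fun b _ => ?_
  split_ifs
  · rw [mul_one_div]
  · rw [mul_zero]

theorem bsm_egf (n : ℕ) :
    ((Nat.card {f : Equiv.Perm (Fin (2 * n)) // IsMatchingInv f ∧ IsBilatSym f}) : ℚ) =
      n.factorial * PowerSeries.coeff n expXplusX2 := by
  rw [card_matchingInv_bilatSym, ← card_isSymmetricMatching_congr (finFoldEquiv n)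
    finFoldEquiv_flip, card_symmetricMatching_prod_bool, factorial_mul_coeff_expXplusX2]
  push_cast
  simpa only [Fintype.card_fin] using Perm.sum_two_pow_card_cycleType (α := Fin n)
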